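/- For every integer $d \ge 1$, the identity $\sum_{k+m+n=d,\ k,m,n\ge 0} \dfrac{v^{\binom{n+1}{2} - 2km + 2k}}{[n]!\,[2k]^{!!}\,[2m]^{!!}} = \dfrac{2 v^d (v+v^{-1})(v^2+v^{-2})\cdots(v^{d-1}+v^{1-d})}{[d]!}$ holds in $\mathbb{Q}(v)$. -/

import Mathlib

noncomputable section

abbrev K : Type := RatFunc ℚ

/-- The indeterminate `v` in `ℚ(v)`. -/
def v : K := RatFunc.X

/-- Quantum integer `[m] = (v^m - v^{-m})/(v - v^{-1})`. -/
def qint (m : ℤ) : K := (v ^ m - v ^ (-m)) / (v - v⁻¹)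

/-- Quantum factorial `[r]! = ∏_{i=1}^r [i]`. -/
def qfact (r : ℕ) : K := ∏ i ∈ Finset.range r, qint ((i : ℤ) + 1)

/-- Quantum double factorial `[2r]!! = ∏_{i=1}^r [2i]`. -/
def qdfact (r : ℕ) : K := ∏ i ∈ Finset.range r, qint (2 * ((i : ℤ) + 1))

/-- Balanced Gaussian binomial coefficient `[m][m-1]⋯[m-r+1]/[r]!`. -/
def qbinom (m : ℤ) (r : ℕ) : K := (∏ i ∈ Finset.range r, qint (m - (i : ℤ))) / qfact r

/-- Gaussian binomial with integer lower index, vanishing for negative lower index. -/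
def qbinomZ (m r : ℤ) : K := if 0 ≤ r then qbinom m r.toNat else 0

/-!
Group the terms by `n` and put `c = d - n`. The inner sum over `k + m = c` equals
`v^(c - C(c,2)) / [c]!`, and collecting exponents turns the outer sum into
`v^(d - C(d,2)) ∑_{n + c = d} v^((d-1) n) / ([n]! [c]!)`. By the q-binomial theorem this is
`v^(d - C(d,2)) ∏_{j<d} (1 + v^(2j)) / [d]!`, and `∏_{j<d} (1 + v^(2j))` factors as
`2 v^C(d,2) ∏_{j=1}^{d-1} (v^j + v^(-j))`. Both summation identities are proved by induction on
the length of the antidiagonal, using the q-Pascal rule `[i + j] = v^j [i] + v^(-i) [j]`.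
-/

open Finset

lemma v_ne_zero : v ≠ 0 := RatFunc.X_ne_zero

lemma v_pow_ne_one {k : ℕ} (hk : k ≠ 0) : v ^ k ≠ 1 := by
  rw [v, ← RatFunc.algebraMap_X, ← map_pow, ← map_one (algebraMap (Polynomial ℚ) K), Ne,
    (RatFunc.algebraMap_injective ℚ).eq_iff]
  intro h
  simpa [hk] using congrArg Polynomial.natDegree h

lemma v_zpow_eq_one_iff {n : ℤ} : v ^ n = 1 ↔ n = 0 := by
  refine ⟨fun h => ?_, fun h => by rw [h, zpow_zero]⟩
  by_contra hn
  obtain ⟨k, rfl | rfl⟩ := Int.eq_nat_or_neg n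
  · exact v_pow_ne_one (k := k) (by omega) (by rwa [zpow_natCast] at h)
  · exact v_pow_ne_one (k := k) (by omega) (by rwa [zpow_neg, inv_eq_one, zpow_natCast] at h)

lemma v_zpow_inj {a b : ℤ} : v ^ a = v ^ b ↔ a = b := by
  rw [← div_eq_one_iff_eq (zpow_ne_zero _ v_ne_zero), ← zpow_sub₀ v_ne_zero,
    v_zpow_eq_one_iff, sub_eq_zero]

lemma v_zpow_mul_v_zpow {a b c : ℤ} (h : a + b = c) : v ^ a * v ^ b = v ^ c := by
  rw [← zpow_add₀ v_ne_zero, h]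

lemma qint_ne_zero {m : ℤ} (hm : m ≠ 0) : qint m ≠ 0 := by
  refine div_ne_zero (sub_ne_zero.2 fun h => hm ?_) (sub_ne_zero.2 fun h => ?_)
  · linarith [v_zpow_inj.1 h]
  · have : v ^ (1 : ℤ) = v ^ (-1 : ℤ) := by rwa [zpow_one, zpow_neg_one]
    exact absurd (v_zpow_inj.1 this) (by norm_num)

lemma qint_zero : qint 0 = 0 := by simp [qint]

lemma qint_add (a b : ℤ) : qint (a + b) = v ^ a * qint b + v ^ (-b) * qint a := by
  have := v_ne_zero
  simp only [qint, zpow_add₀ this, zpow_neg, neg_add]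
  field_simp
  ring

lemma qint_two_mul (m : ℤ) : qint (2 * m) = (v ^ m + v ^ (-m)) * qint m := by
  have := v_ne_zero
  simp only [qint, two_mul, zpow_add₀ this, zpow_neg, neg_add]
  field_simp
  ring

lemma qfact_succ (n : ℕ) : qfact (n + 1) = qfact n * qint (n + 1) := prod_range_succ _ n

lemma qdfact_succ (n : ℕ) : qdfact (n + 1) = qdfact n * qint (2 * (n + 1)) := prod_range_succ _ n

lemma qfact_ne_zero (n : ℕ) : qfact n ≠ 0 :=
  prod_ne_zero_iff.2 fun _ _ => qint_ne_zero (by omega)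

lemma qint_mul_sum_antidiagonal_succ {a : ℤ} (ha : a ≠ 0) {F : ℕ → K}
    (hF : ∀ i : ℕ, F (i + 1) = F i * qint (a * (i + 1))) (m : ℕ) (g : ℕ × ℕ → K) :
    qint (a * (m + 1)) * ∑ p ∈ antidiagonal (m + 1), g p / (F p.1 * F p.2) =
      ∑ p ∈ antidiagonal m,
        (v ^ (-(a * p.1)) * g (p.1, p.2 + 1) + v ^ (a * p.2) * g (p.1 + 1, p.2)) /
          (F p.1 * F p.2) := by
  have hq (i : ℕ) : qint (a * (i + 1)) ≠ 0 := qint_ne_zero (mul_ne_zero ha (by omega))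
  have pascal : ∀ p ∈ antidiagonal (m + 1), qint (a * (m + 1)) * (g p / (F p.1 * F p.2)) =
      v ^ (-(a * p.1)) * qint (a * p.2) * g p / (F p.1 * F p.2) +
        v ^ (a * p.2) * qint (a * p.1) * g p / (F p.1 * F p.2) := by
    intro p hp
    have hm : a * (m + 1) = a * p.2 + a * p.1 := by
      have := mem_antidiagonal.1 hp
      rw [← mul_add]
      congr 1
      omega
    rw [hm, qint_add]
    ring
  rw [mul_sum, sum_congr rfl pascal, sum_add_distrib, Nat.sum_antidiagonal_succ',
    Nat.sum_antidiagonal_succ]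
  simp only [Nat.cast_zero, mul_zero, qint_zero, zero_mul, zero_div, zero_add, Nat.cast_succ,
    ← sum_add_distrib, add_div]
  refine sum_congr rfl fun p _ => ?_
  rw [hF, hF, ← mul_assoc (F p.1), mul_right_comm (F p.1) (qint _)]
  congr 1 <;> rw [mul_right_comm _ (qint _), mul_div_mul_right _ _ (hq _)]

theorem qbinomial_theorem (x : K) (m : ℕ) :
    ∑ p ∈ antidiagonal m, v ^ (((m : ℤ) - 1) * p.1) * x ^ p.1 / (qfact p.1 * qfact p.2) =
      (∏ j ∈ range m, (1 + v ^ (2 * (j : ℤ)) * x)) / qfact m := by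
  induction m with
  | zero => simp [qfact]
  | succ m ih =>
    have hF (i : ℕ) : qfact (i + 1) = qfact i * qint (1 * (i + 1)) := by
      rw [one_mul, qfact_succ]
    have step := qint_mul_sum_antidiagonal_succ one_ne_zero hF m
      (fun p => v ^ ((((m + 1 : ℕ) : ℤ) - 1) * p.1) * x ^ p.1)
    have summand : ∀ p ∈ antidiagonal m,
        (v ^ (-(1 * (p.1 : ℤ))) * (v ^ ((((m + 1 : ℕ) : ℤ) - 1) * p.1) * x ^ p.1) +
          v ^ (1 * (p.2 : ℤ)) *
            (v ^ ((((m + 1 : ℕ) : ℤ) - 1) * ((p.1 + 1 : ℕ) : ℤ)) * x ^ (p.1 + 1))) /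
            (qfact p.1 * qfact p.2) =
        (1 + v ^ (2 * (m : ℤ)) * x) *
          (v ^ (((m : ℤ) - 1) * p.1) * x ^ p.1 / (qfact p.1 * qfact p.2)) := by
      rintro ⟨i, j⟩ hp
      rw [HasAntidiagonal.mem_antidiagonal] at hp
      subst hp
      have e1 : v ^ (-(1 * (i : ℤ))) * v ^ ((((i + j + 1 : ℕ) : ℤ) - 1) * i) =
          v ^ ((((i + j : ℕ) : ℤ) - 1) * i) := v_zpow_mul_v_zpow (by push_cast; ring)
      have e2 :
          v ^ (1 * (j : ℤ)) * v ^ ((((i + j + 1 : ℕ) : ℤ) - 1) * ((i + 1 : ℕ) : ℤ)) =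
          v ^ (2 * ((i + j : ℕ) : ℤ)) * v ^ ((((i + j : ℕ) : ℤ) - 1) * i) := by
        rw [v_zpow_mul_v_zpow rfl, v_zpow_mul_v_zpow rfl]
        congr 1
        push_cast
        ring
      dsimp only
      rw [← mul_assoc, e1, ← mul_assoc, e2]
      ring
    rw [sum_congr rfl summand, ← mul_sum, ih, one_mul] at step
    rw [prod_range_succ, qfact_succ,
      eq_div_iff (mul_ne_zero (qfact_ne_zero m) (qint_ne_zero (by omega))),
      mul_comm (qfact m), ← mul_assoc, mul_comm _ (qint _), step, mul_assoc,
      div_mul_cancel₀ _ (qfact_ne_zero m), mul_comm]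

theorem sum_antidiagonal_div_qdfact (c : ℕ) :
    ∑ p ∈ antidiagonal c, v ^ (2 * (p.1 : ℤ) - 2 * p.1 * p.2) / (qdfact p.1 * qdfact p.2) =
      v ^ ((c : ℤ) - c.choose 2) / qfact c := by
  induction c with
  | zero => simp [qfact, qdfact]
  | succ c ih =>
    have step := qint_mul_sum_antidiagonal_succ two_ne_zero qdfact_succ c
      (fun p => v ^ (2 * (p.1 : ℤ) - 2 * p.1 * p.2))
    -- swapping the two coordinates turns this half back into the sum for `c`
    have first : ∑ p ∈ antidiagonal c,
        v ^ (-(2 * (p.1 : ℤ))) * v ^ (2 * (p.1 : ℤ) - 2 * p.1 * ((p.2 + 1 : ℕ) : ℤ)) /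
          (qdfact p.1 * qdfact p.2) =
        v ^ (-2 * (c : ℤ)) * ∑ p ∈ antidiagonal c,
          v ^ (2 * (p.1 : ℤ) - 2 * p.1 * p.2) / (qdfact p.1 * qdfact p.2) := by
      rw [← Nat.sum_antidiagonal_swap, mul_sum]
      refine sum_congr rfl fun p hp => ?_
      have hc : (c : ℤ) = p.1 + p.2 := by
        exact_mod_cast (HasAntidiagonal.mem_antidiagonal.1 hp).symm
      rw [Prod.fst_swap, Prod.snd_swap, mul_comm (qdfact p.2), ← mul_div_assoc,
        v_zpow_mul_v_zpow (c := -2 * (c : ℤ) + (2 * (p.1 : ℤ) - 2 * p.1 * p.2))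
          (by rw [hc]; push_cast; ring), zpow_add₀ v_ne_zero]
    have second : ∑ p ∈ antidiagonal c,
        v ^ (2 * (p.2 : ℤ)) *
          v ^ (2 * ((p.1 + 1 : ℕ) : ℤ) - 2 * ((p.1 + 1 : ℕ) : ℤ) * p.2) /
          (qdfact p.1 * qdfact p.2) =
        v ^ (2 : ℤ) * ∑ p ∈ antidiagonal c,
          v ^ (2 * (p.1 : ℤ) - 2 * p.1 * p.2) / (qdfact p.1 * qdfact p.2) := by
      rw [mul_sum]
      refine sum_congr rfl fun p _ => ?_
      rw [← mul_div_assoc, v_zpow_mul_v_zpow (c := 2 + (2 * (p.1 : ℤ) - 2 * p.1 * p.2))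
          (by push_cast; ring), zpow_add₀ v_ne_zero]
    simp only [add_div, sum_add_distrib] at step
    rw [first, second, ← add_mul, ih] at step
    have hP : v ^ ((c : ℤ) + 1) + v ^ (-((c : ℤ) + 1)) ≠ 0 :=
      left_ne_zero_of_mul (qint_two_mul _ ▸ qint_ne_zero (by omega))
    have hfac : v ^ (-2 * (c : ℤ)) + v ^ (2 : ℤ) =
        (v ^ ((c : ℤ) + 1) + v ^ (-((c : ℤ) + 1))) * v ^ (1 - (c : ℤ)) := by
      rw [add_mul, v_zpow_mul_v_zpow (c := 2) (by ring), v_zpow_mul_v_zpow (c := -2 * c) (by ring),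
        add_comm]
    rw [qint_two_mul, hfac, mul_assoc, mul_assoc] at step
    rw [qfact_succ, eq_div_iff (mul_ne_zero (qfact_ne_zero c) (qint_ne_zero (by omega))),
      mul_comm (qfact c), ← mul_assoc, mul_comm _ (qint _), mul_left_cancel₀ hP step, mul_assoc,
      div_mul_cancel₀ _ (qfact_ne_zero c), v_zpow_mul_v_zpow]
    rw [Nat.choose_succ_succ, Nat.choose_one_right]
    push_cast
    ring

lemma sum_range_sum_range_eq_sum_antidiagonal {M : Type*} [AddCommMonoid M] (d : ℕ)
    (h : ℕ → ℕ → ℕ → M) :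
    ∑ k ∈ range (d + 1), ∑ m ∈ range (d + 1 - k), h k m (d - k - m) =
      ∑ p ∈ antidiagonal d, ∑ q ∈ antidiagonal p.1, h q.1 q.2 p.2 := by
  calc ∑ k ∈ range (d + 1), ∑ m ∈ range (d + 1 - k), h k m (d - k - m)
      = ∑ k ∈ Ico 0 (d + 1), ∑ c ∈ Ico k (d + 1), h k (c - k) (d - c) := by
        rw [range_eq_Ico]
        refine sum_congr rfl fun k _ => ?_
        rw [sum_Ico_eq_sum_range]
        simp only [Nat.add_sub_cancel_left, Nat.sub_sub]
    _ = ∑ c ∈ Ico 0 (d + 1), ∑ k ∈ Ico 0 (c + 1), h k (c - k) (d - c) :=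
        sum_Ico_Ico_comm _ _ _
    _ = ∑ p ∈ antidiagonal d, ∑ q ∈ antidiagonal p.1, h q.1 q.2 p.2 := by
        simp only [← range_eq_Ico, Nat.sum_antidiagonal_eq_sum_range_succ_mk]

lemma prod_range_one_add_v_zpow {d : ℕ} (hd : 1 ≤ d) :
    ∏ j ∈ range d, (1 + v ^ (2 * (j : ℤ))) =
      2 * v ^ (d.choose 2) * ∏ j ∈ Icc 1 (d - 1), (v ^ (j : ℤ) + v ^ (-(j : ℤ))) := by
  obtain ⟨e, rfl⟩ : ∃ e, d = e + 1 := ⟨d - 1, by omega⟩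
  have hfac (j : ℕ) : 1 + v ^ (2 * ((j + 1 : ℕ) : ℤ)) =
      v ^ (j + 1) * (v ^ ((j + 1 : ℕ) : ℤ) + v ^ (-((j + 1 : ℕ) : ℤ))) := by
    rw [← zpow_natCast, mul_add,
      v_zpow_mul_v_zpow (c := 2 * ((j + 1 : ℕ) : ℤ)) (by push_cast; ring),
      v_zpow_mul_v_zpow (c := 0) (by ring), zpow_zero, add_comm]
  have hgauss : ∑ j ∈ range e, (j + 1) = (e + 1).choose 2 := by
    rw [Nat.choose_two_right, ← sum_range_id, sum_range_succ', add_zero]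
  rw [prod_range_succ', Nat.cast_zero, mul_zero, zpow_zero, one_add_one_eq_two]
  simp only [hfac, prod_mul_distrib, prod_pow_eq_pow_sum, hgauss]
  rw [Nat.add_sub_cancel, ← Ico_add_one_right_eq_Icc, prod_Ico_eq_prod_range, Nat.add_sub_cancel]
  simp only [add_comm 1]
  ring

lemma triangle_add_sub_choose_two (c n : ℕ) :
    ((n * (n + 1) / 2 : ℕ) : ℤ) + ((c : ℤ) - c.choose 2) =
      ((c + n : ℕ) : ℤ) - (c + n).choose 2 + (((c + n : ℕ) : ℤ) - 1) * n := by
  rw [show n * (n + 1) / 2 = (n + 1).choose 2 by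
    rw [Nat.choose_two_right, Nat.add_sub_cancel, mul_comm]]
  apply Int.cast_injective (α := ℚ)
  push_cast [Nat.cast_choose_two]
  ring

lemma sum_antidiagonal_zpow_div_qfact_mul_qdfact {c n d : ℕ} (h : c + n = d) :
    ∑ q ∈ antidiagonal c,
      v ^ (((n * (n + 1) / 2 : ℕ) : ℤ) - 2 * (q.1 : ℤ) * q.2 + 2 * (q.1 : ℤ)) /
        (qfact n * qdfact q.1 * qdfact q.2) =
      v ^ ((d : ℤ) - d.choose 2) * (v ^ (((d : ℤ) - 1) * n) / (qfact n * qfact c)) := by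
  subst h
  calc _ = v ^ ((n * (n + 1) / 2 : ℕ) : ℤ) / qfact n * ∑ q ∈ antidiagonal c,
        v ^ (2 * (q.1 : ℤ) - 2 * q.1 * q.2) / (qdfact q.1 * qdfact q.2) := by
        rw [mul_sum]
        refine sum_congr rfl fun q _ => ?_
        rw [div_mul_div_comm, ← mul_assoc (qfact n), ← zpow_add₀ v_ne_zero]
        congr 2
        ring
    _ = _ := by
        rw [sum_antidiagonal_div_qdfact, div_mul_div_comm,
          v_zpow_mul_v_zpow (triangle_add_sub_choose_two c n), zpow_add₀ v_ne_zero, mul_div_assoc]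

theorem stmt4 (d : ℕ) (hd : 1 ≤ d) :
    ∑ k ∈ Finset.range (d + 1), ∑ m ∈ Finset.range (d + 1 - k),
      v ^ ((((d - k - m) * (d - k - m + 1) / 2 : ℕ) : ℤ)
            - 2 * (k : ℤ) * m + 2 * (k : ℤ)) /
        (qfact (d - k - m) * qdfact k * qdfact m)
    = 2 * v ^ d *
        (∏ j ∈ Finset.Icc 1 (d - 1), (v ^ (j : ℤ) + v ^ (-(j : ℤ)))) / qfact d := by
  have qbinomial_one := qbinomial_theorem 1 d
  simp only [one_pow, mul_one] at qbinomial_one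
  rw [sum_range_sum_range_eq_sum_antidiagonal d (fun k m n =>
      v ^ (((n * (n + 1) / 2 : ℕ) : ℤ) - 2 * (k : ℤ) * m + 2 * (k : ℤ)) /
        (qfact n * qdfact k * qdfact m)),
    sum_congr rfl fun p hp =>
      sum_antidiagonal_zpow_div_qfact_mul_qdfact (HasAntidiagonal.mem_antidiagonal.1 hp),
    ← mul_sum, ← Nat.sum_antidiagonal_swap]
  simp only [Prod.fst_swap, Prod.snd_swap]
  rw [qbinomial_one, prod_range_one_add_v_zpow hd]
  calc _ = 2 * (v ^ ((d : ℤ) - d.choose 2) * v ^ ((d.choose 2 : ℕ) : ℤ)) *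
        (∏ j ∈ Icc 1 (d - 1), (v ^ (j : ℤ) + v ^ (-(j : ℤ)))) / qfact d := by
        rw [zpow_natCast]; ring
    _ = _ := by rw [v_zpow_mul_v_zpow (sub_add_cancel _ _), zpow_natCast]
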